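/- Let k be a σ-field, A a nonzero k-σ-algebra, n ≥ 1, and d ≥ 1. Suppose χ is an invertible n × n matrix over A ⊗[k] A satisfying the cocycle condition ∂₂(χ) = ∂₁(χ) · ∂₃(χ) (the homomorphisms ∂ᵢ applied entrywise) and τ^d(χ) = χ (τ^d applied entrywise). Then there exist an invertible n × n matrix α over A and an invertible n × n matrix a over k such that χ = δ₁(α) · δ₂(α)⁻¹ and σ_A^d(α) = α · (algebraMap k A applied entrywise to a). (This is the cocycle-level classification of torsors for the σ-algebraic group G = {g ∈ GLₙ | σ^d(g) = g}: every G-torsor is isomorphic to Y = {g ∈ GLₙ | σ^d(g) = g a} for some a ∈ GLₙ(k).) -/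

import Mathlib

/-! Since `k` is a field, `algebraMap k A` has a `k`-linear retraction `f`, and slicing with `f`
(`a ⊗ x ↦ f a • x`) contracts the Amitsur complex; this makes faithfully flat descent explicit.
The cocycle `χ` is a descent datum on `Aⁿ`, whose `k`-space of invariants
`W = {v | χ · δ₂(v) = δ₁(v)}` spans `Aⁿ` over `A` (slices of the columns of `χ` lie in `W`),
while `k`-independent vectors of `W` stay `A`-independent. So a `k`-basis of `W` is an `A`-basis
of `Aⁿ`, and its matrix `α` satisfies `χ = δ₁(α) δ₂(α)⁻¹`. As `τᵈ ∘ δᵢ = δᵢ ∘ σᵈ`, the invariance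
`τᵈ(χ) = χ` says that `β = α⁻¹ σᵈ(α)` has `δ₁(β) = δ₂(β)`, so `β` has entries in `k`: the
equalizer of `δ₁` and `δ₂` is `k`, again by slicing. -/

open TensorProduct Matrix

/-- `δ₁ : A → A ⊗[k] A`, `a ↦ 1 ⊗ a`. -/
noncomputable def amitsurD1 (k A : Type*) [CommRing k] [CommRing A] [Algebra k A] :
    A →ₐ[k] A ⊗[k] A :=
  Algebra.TensorProduct.includeRight

/-- `δ₂ : A → A ⊗[k] A`, `a ↦ a ⊗ 1`. -/
noncomputable def amitsurD2 (k A : Type*) [CommRing k] [CommRing A] [Algebra k A] :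
    A →ₐ[k] A ⊗[k] A :=
  Algebra.TensorProduct.includeLeft

/-- `∂₁ : A ⊗[k] A → A ⊗[k] A ⊗[k] A`, `a ⊗ b ↦ 1 ⊗ a ⊗ b`. -/
noncomputable def amitsurP1 (k A : Type*) [CommRing k] [CommRing A] [Algebra k A] :
    A ⊗[k] A →ₐ[k] A ⊗[k] (A ⊗[k] A) :=
  Algebra.TensorProduct.includeRight

/-- `∂₂ : A ⊗[k] A → A ⊗[k] A ⊗[k] A`, `a ⊗ b ↦ a ⊗ 1 ⊗ b`. -/
noncomputable def amitsurP2 (k A : Type*) [CommRing k] [CommRing A] [Algebra k A] :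
    A ⊗[k] A →ₐ[k] A ⊗[k] (A ⊗[k] A) :=
  Algebra.TensorProduct.map (AlgHom.id k A) Algebra.TensorProduct.includeRight

/-- `∂₃ : A ⊗[k] A → A ⊗[k] A ⊗[k] A`, `a ⊗ b ↦ a ⊗ b ⊗ 1`. -/
noncomputable def amitsurP3 (k A : Type*) [CommRing k] [CommRing A] [Algebra k A] :
    A ⊗[k] A →ₐ[k] A ⊗[k] (A ⊗[k] A) :=
  Algebra.TensorProduct.map (AlgHom.id k A) Algebra.TensorProduct.includeLeft

section Slice

variable {k A : Type*} [CommRing k] [CommRing A] [Algebra k A]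

noncomputable def slice {M : Type*} [AddCommMonoid M] [Module k M] (f : A →ₗ[k] k) :
    A ⊗[k] M →ₗ[k] M :=
  TensorProduct.lift ((LinearMap.lsmul k M).comp f)

variable (f : A →ₗ[k] k)

@[simp]
lemma slice_tmul {M : Type*} [AddCommMonoid M] [Module k M] (a : A) (m : M) :
    slice f (a ⊗ₜ[k] m) = f a • m :=
  rfl

variable {B : Type*} [Ring B] [Algebra k B]

lemma slice_one_tmul_mul (x : B) (y : A ⊗[k] B) :
    slice f ((1 ⊗ₜ[k] x) * y) = x * slice f y := by
  induction y using TensorProduct.induction_on with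
  | zero => simp
  | tmul a b => simp
  | add y₁ y₂ h₁ h₂ => simp [mul_add, h₁, h₂]

lemma slice_mul_tmul (z : A ⊗[k] B) (a : A) (b : B) :
    slice f (z * (a ⊗ₜ[k] b)) = slice (f ∘ₗ LinearMap.mulRight k a) z * b := by
  induction z using TensorProduct.induction_on with
  | zero => simp
  | tmul x y => simp
  | add z₁ z₂ h₁ h₂ => simp [add_mul, h₁, h₂]

lemma slice_amitsurD1 (x : A) : slice f (amitsurD1 k A x) = f 1 • x := rfl

lemma slice_amitsurD2 (x : A) : slice f (amitsurD2 k A x) = algebraMap k A (f x) := by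
  simp [amitsurD2, Algebra.algebraMap_eq_smul_one]

lemma slice_amitsurP2 (z : A ⊗[k] A) :
    slice f (amitsurP2 k A z) = amitsurD1 k A (slice f z) := by
  induction z using TensorProduct.induction_on with
  | zero => simp
  | tmul a b => simp [amitsurP2, amitsurD1]
  | add z₁ z₂ h₁ h₂ => simp [h₁, h₂]

lemma slice_amitsurP3 (z : A ⊗[k] A) :
    slice f (amitsurP3 k A z) = amitsurD2 k A (slice f z) := by
  induction z using TensorProduct.induction_on with
  | zero => simp
  | tmul a b => simp [amitsurP3, amitsurD2, TensorProduct.smul_tmul']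
  | add z₁ z₂ h₁ h₂ => simp [h₁, h₂]

lemma eq_algebraMap_of_amitsurD1_eq_amitsurD2 (hf : f 1 = 1) {x : A}
    (h : amitsurD1 k A x = amitsurD2 k A x) : x = algebraMap k A (f x) := by
  simpa [slice_amitsurD1, slice_amitsurD2, hf] using congrArg (slice f) h

end Slice

section Descent

variable {k A : Type*} [CommRing k] [CommRing A] [Algebra k A] {n : Type*} [Fintype n]
  (χ : Matrix n n (A ⊗[k] A))

noncomputable def descentSpace : Submodule k (n → A) :=
  LinearMap.ker ((χ.mulVecLin.restrictScalars k) ∘ₗ (amitsurD2 k A).toLinearMap.compLeft n -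
    (amitsurD1 k A).toLinearMap.compLeft n)

variable {χ}

lemma mem_descentSpace {v : n → A} :
    v ∈ descentSpace χ ↔ χ *ᵥ (amitsurD2 k A ∘ v) = amitsurD1 k A ∘ v := by
  rw [descentSpace, LinearMap.mem_ker, LinearMap.sub_apply, sub_eq_zero]
  rfl

lemma slice_col_mem_descentSpace
    (hcoc : χ.map (amitsurP2 k A) = χ.map (amitsurP1 k A) * χ.map (amitsurP3 k A))
    (f : A →ₗ[k] k) (j : n) : (fun i => slice f (χ i j)) ∈ descentSpace χ := by
  rw [mem_descentSpace]
  ext i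
  calc ∑ l, χ i l * amitsurD2 k A (slice f (χ l j))
      = slice f (∑ l, amitsurP1 k A (χ i l) * amitsurP3 k A (χ l j)) := by
        simp only [map_sum, ← slice_amitsurP3, amitsurP1, ← slice_one_tmul_mul]
        rfl
    _ = amitsurD1 k A (slice f (χ i j)) := by
        rw [← slice_amitsurP2, ← Matrix.map_apply (f := amitsurP2 k A), hcoc]
        rfl

lemma slice_mul_mem_span_descentSpace
    (hcoc : χ.map (amitsurP2 k A) = χ.map (amitsurP1 k A) * χ.map (amitsurP3 k A))
    (l : n) (z : A ⊗[k] A) (f : A →ₗ[k] k) :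
    (fun i => slice f (χ i l * z)) ∈ Submodule.span A (descentSpace χ : Set (n → A)) := by
  induction z using TensorProduct.induction_on generalizing f with
  | zero => simp [← Pi.zero_def]
  | tmul a b =>
      have h : (fun i => slice f (χ i l * (a ⊗ₜ[k] b))) =
          b • fun i => slice (f ∘ₗ LinearMap.mulRight k a) (χ i l) := by
        ext i
        rw [slice_mul_tmul, Pi.smul_apply, smul_eq_mul, mul_comm]
      rw [h]
      exact Submodule.smul_mem _ b (Submodule.subset_span (slice_col_mem_descentSpace hcoc _ l))
  | add z₁ z₂ h₁ h₂ =>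
      convert Submodule.add_mem _ (h₁ f) (h₂ f) using 1
      ext i
      simp [mul_add]

lemma span_descentSpace_eq_top [DecidableEq n]
    (hcoc : χ.map (amitsurP2 k A) = χ.map (amitsurP1 k A) * χ.map (amitsurP3 k A))
    (hχ : IsUnit χ) {f : A →ₗ[k] k} (hf : f 1 = 1) :
    Submodule.span A (descentSpace χ : Set (n → A)) = ⊤ := by
  refine eq_top_iff.mpr fun v _ => ?_
  set w := χ⁻¹ *ᵥ (amitsurD1 k A ∘ v)
  have hw : χ *ᵥ w = amitsurD1 k A ∘ v := by
    rw [Matrix.mulVec_mulVec, Matrix.mul_nonsing_inv _ ((Matrix.isUnit_iff_isUnit_det χ).mp hχ),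
      Matrix.one_mulVec]
  have hv : v = ∑ l, fun i => slice f (χ i l * w l) := by
    ext i
    have := congrFun hw i
    simp only [Matrix.mulVec, dotProduct, Function.comp_apply] at this
    simp [← map_sum, this, slice_amitsurD1, hf]
  rw [hv]
  exact Submodule.sum_mem _ fun l _ => slice_mul_mem_span_descentSpace hcoc l (w l) f

end Descent

lemma exists_linearMap_apply_one_eq_one (k A : Type*) [Field k] [Ring A] [Nontrivial A]
    [Algebra k A] : ∃ f : A →ₗ[k] k, f 1 = 1 := by
  obtain ⟨g, hg⟩ := (Algebra.linearMap k A).exists_leftInverse_of_injective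
    (LinearMap.ker_eq_bot.mpr (algebraMap k A).injective)
  exact ⟨g, by simpa using LinearMap.congr_fun hg 1⟩

section FieldDescent

variable {k A : Type*} [Field k] [CommRing A] [Algebra k A] {n : Type*} [Fintype n]
  [DecidableEq n]

lemma linearIndependent_of_forall_mem_descentSpace {χ : Matrix n n (A ⊗[k] A)} (hχ : IsUnit χ)
    {ι : Type*} {u : ι → n → A} (hu : LinearIndependent k u)
    (huW : ∀ i, u i ∈ descentSpace χ) : LinearIndependent A u := by
  rw [linearIndependent_iff'] at hu ⊢
  intro s c hc i hi
  set z : n → A ⊗[k] A := ∑ j ∈ s, amitsurD1 k A (c j) • (amitsurD2 k A ∘ u j)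
  have hχz : χ *ᵥ z = 0 := by
    simp only [z, Matrix.mulVec_sum, Matrix.mulVec_smul, (mem_descentSpace.mp (huW _))]
    ext l
    simpa [← map_mul, ← map_sum] using congrArg (amitsurD1 k A) (congrFun hc l)
  have hz : z = 0 := by
    rw [← Matrix.one_mulVec z, ← Matrix.nonsing_inv_mul _ ((Matrix.isUnit_iff_isUnit_det χ).mp hχ),
      ← Matrix.mulVec_mulVec, hχz, Matrix.mulVec_zero]
  -- `id ⊗ ψ` sends `z = ∑ u j ⊗ c j` to `∑ ψ (c j) • u j`.
  have hψ (ψ : Module.Dual k A) : ψ (c i) = 0 := by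
    refine hu s (fun j => ψ (c j)) ?_ i hi
    ext l
    have := congrArg (slice ψ ∘ TensorProduct.comm k A A) (congrFun hz l)
    simpa [z, amitsurD1, amitsurD2] using this
  exact (Module.forall_dual_apply_eq_zero_iff k (c i)).mp hψ

lemma exists_basis_forall_mem_descentSpace [Nontrivial A] {χ : Matrix n n (A ⊗[k] A)}
    (hcoc : χ.map (amitsurP2 k A) = χ.map (amitsurP1 k A) * χ.map (amitsurP3 k A))
    (hχ : IsUnit χ) : ∃ b : Module.Basis n A (n → A), ∀ j, b j ∈ descentSpace χ := by
  obtain ⟨f, hf⟩ := exists_linearMap_apply_one_eq_one k A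
  set bW := Module.Basis.ofVectorSpace k (descentSpace χ)
  have hindk : LinearIndependent k ((descentSpace χ).subtype ∘ bW) :=
    bW.linearIndependent.map' _ (Submodule.ker_subtype _)
  have hind : LinearIndependent A ((descentSpace χ).subtype ∘ bW) :=
    linearIndependent_of_forall_mem_descentSpace hχ hindk fun i => (bW i).2
  have hspan : ⊤ ≤ Submodule.span A (Set.range ((descentSpace χ).subtype ∘ bW)) := by
    rw [← span_descentSpace_eq_top hcoc hχ hf, Submodule.span_le]
    intro w hw
    have hwk : w ∈ Submodule.span k (Set.range ((descentSpace χ).subtype ∘ bW)) := by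
      rwa [Set.range_comp, Submodule.span_image, bW.span_eq, Submodule.map_subtype_top]
    exact Submodule.span_le_restrictScalars k A _ hwk
  set bA := Module.Basis.mk hind hspan
  exact ⟨bA.reindex (bA.indexEquiv (Pi.basisFun A n)), fun j => by simp [bA]⟩

theorem exists_units_eq_amitsurD1_mul_amitsurD2_inv [Nontrivial A]
    (χ : (Matrix n n (A ⊗[k] A))ˣ)
    (hcoc : χ.val.map (amitsurP2 k A) =
      χ.val.map (amitsurP1 k A) * χ.val.map (amitsurP3 k A)) :
    ∃ α : (Matrix n n A)ˣ,
      χ = Units.map ((amitsurD1 k A).toRingHom.mapMatrix.toMonoidHom) α *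
        (Units.map ((amitsurD2 k A).toRingHom.mapMatrix.toMonoidHom) α)⁻¹ := by
  obtain ⟨b, hb⟩ := exists_basis_forall_mem_descentSpace hcoc χ.isUnit
  have := (Pi.basisFun A n).invertibleToMatrix b
  refine ⟨unitOfInvertible ((Pi.basisFun A n).toMatrix b), ?_⟩
  rw [eq_mul_inv_iff_mul_eq, Units.ext_iff]
  ext i j
  simpa [Matrix.mul_apply, Matrix.mulVec, dotProduct, Module.Basis.toMatrix_apply] using
    congrFun (mem_descentSpace.mp (hb j)) i

lemma exists_units_eq_map_algebraMap_of_amitsurD1_eq_amitsurD2 [Nontrivial A]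
    {β : (Matrix n n A)ˣ}
    (h : Units.map ((amitsurD1 k A).toRingHom.mapMatrix.toMonoidHom) β =
      Units.map ((amitsurD2 k A).toRingHom.mapMatrix.toMonoidHom) β) :
    ∃ b : (Matrix n n k)ˣ, β.val = b.val.map (algebraMap k A) := by
  obtain ⟨f, hf⟩ := exists_linearMap_apply_one_eq_one k A
  have hb : β.val = (β.val.map f).map (algebraMap k A) := by
    ext i j
    refine eq_algebraMap_of_amitsurD1_eq_amitsurD2 f hf ?_
    simpa using congrArg (fun M : (Matrix n n (A ⊗[k] A))ˣ => M.val i j) h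
  have hunit : IsUnit (β.val.map f) := by
    rw [Matrix.isUnit_iff_isUnit_det]
    refine isUnit_of_map_unit (algebraMap k A) _ ?_
    rw [RingHom.map_det, RingHom.mapMatrix_apply, ← hb]
    exact (Matrix.isUnit_iff_isUnit_det _).mp β.isUnit
  exact ⟨hunit.unit, hb⟩

end FieldDescent

lemma map_inv_mul_eq_of_map_mul_inv_fixed {G H : Type*} [Group G] [Group H] {φ₁ φ₂ : G →* H}
    {ρ : G →* G} {θ : H →* H} (h₁ : ∀ g, θ (φ₁ g) = φ₁ (ρ g)) (h₂ : ∀ g, θ (φ₂ g) = φ₂ (ρ g))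
    {g : G} (hg : θ (φ₁ g * (φ₂ g)⁻¹) = φ₁ g * (φ₂ g)⁻¹) :
    φ₁ (g⁻¹ * ρ g) = φ₂ (g⁻¹ * ρ g) := by
  rw [map_mul, map_inv, h₁, h₂] at hg
  simp only [map_mul, map_inv]
  rw [inv_mul_eq_iff_eq_mul, ← mul_assoc, ← hg]
  group

lemma Function.Semiconj.ringHom_pow {R S : Type*} [NonAssocSemiring R] [NonAssocSemiring S]
    {δ : R → S} {σ : R →+* R} {τ : S →+* S} (h : Function.Semiconj δ σ τ) (d : ℕ) :
    Function.Semiconj δ ⇑(σ ^ d) ⇑(τ ^ d) := by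
  simpa only [RingHom.coe_pow] using h.iterate_right d

theorem torsors_sigma_fixed_group_general (k A : Type*) [Field k] [CommRing A] [Algebra k A]
    [Nontrivial A]
    (σA : A →+* A)
    (τ : A ⊗[k] A →+* A ⊗[k] A)
    (hτ : ∀ a b : A, τ (a ⊗ₜ[k] b) = σA a ⊗ₜ[k] σA b)
    (n d : ℕ)
    (χ : (Matrix (Fin n) (Fin n) (A ⊗[k] A))ˣ)
    (hcoc : χ.val.map (amitsurP2 k A) =
      χ.val.map (amitsurP1 k A) * χ.val.map (amitsurP3 k A))
    (hτχ : χ.val.map (τ ^ d) = χ.val) :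
    ∃ (α : (Matrix (Fin n) (Fin n) A)ˣ) (a : (Matrix (Fin n) (Fin n) k)ˣ),
      χ = Units.map ((amitsurD1 k A).toRingHom.mapMatrix.toMonoidHom) α *
          (Units.map ((amitsurD2 k A).toRingHom.mapMatrix.toMonoidHom) α)⁻¹ ∧
      α.val.map (σA ^ d) = α.val * (a.val.map (algebraMap k A)) := by
  obtain ⟨α, hα⟩ := exists_units_eq_amitsurD1_mul_amitsurD2_inv χ hcoc
  set ρ := Units.map ((σA ^ d).mapMatrix (m := Fin n)).toMonoidHom
  have hτδ (δ : A →ₐ[k] A ⊗[k] A) (hδ : Function.Semiconj δ σA τ)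
      (g : (Matrix (Fin n) (Fin n) A)ˣ) :
      Units.map (τ ^ d).mapMatrix.toMonoidHom (Units.map δ.toRingHom.mapMatrix.toMonoidHom g) =
        Units.map δ.toRingHom.mapMatrix.toMonoidHom (ρ g) := by
    ext i j
    exact (hδ.ringHom_pow d _).symm
  have hfix : Units.map ((τ ^ d).mapMatrix (m := Fin n)).toMonoidHom χ = χ := Units.ext hτχ
  rw [hα] at hfix
  have hβ := map_inv_mul_eq_of_map_mul_inv_fixed (hτδ _ fun x => by simp [amitsurD1, hτ])
    (hτδ _ fun x => by simp [amitsurD2, hτ]) hfix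
  obtain ⟨a, ha⟩ := exists_units_eq_map_algebraMap_of_amitsurD1_eq_amitsurD2 hβ
  refine ⟨α, a, hα, ?_⟩
  calc α.val.map (σA ^ d) = (α * (α⁻¹ * ρ α)).val := by simp [ρ]
    _ = α.val * a.val.map (algebraMap k A) := by rw [Units.val_mul, ha]

/-- Cocycle-level classification of torsors for the σ-algebraic group
`G = {g ∈ GLₙ | σᵈ(g) = g}`: every cocycle `χ` with `τᵈ(χ) = χ` is of the form
`δ₁(α)·δ₂(α)⁻¹` with `σᵈ(α) = α a` for some `a ∈ GLₙ(k)`. -/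
theorem torsors_sigma_fixed_group (k A : Type*) [Field k] [CommRing A] [Algebra k A]
    [Nontrivial A]
    (σk : k →+* k) (σA : A →+* A)
    (hσ : ∀ c : k, σA (algebraMap k A c) = algebraMap k A (σk c))
    (τ : A ⊗[k] A →+* A ⊗[k] A)
    (hτ : ∀ a b : A, τ (a ⊗ₜ[k] b) = σA a ⊗ₜ[k] σA b)
    (n d : ℕ) (hn : 1 ≤ n) (hd : 1 ≤ d)
    (χ : (Matrix (Fin n) (Fin n) (A ⊗[k] A))ˣ)
    (hcoc : χ.val.map (amitsurP2 k A) =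
      χ.val.map (amitsurP1 k A) * χ.val.map (amitsurP3 k A))
    (hτχ : χ.val.map (τ ^ d) = χ.val) :
    ∃ (α : (Matrix (Fin n) (Fin n) A)ˣ) (a : (Matrix (Fin n) (Fin n) k)ˣ),
      χ = Units.map ((amitsurD1 k A).toRingHom.mapMatrix.toMonoidHom) α *
          (Units.map ((amitsurD2 k A).toRingHom.mapMatrix.toMonoidHom) α)⁻¹ ∧
      α.val.map (σA ^ d) = α.val * (a.val.map (algebraMap k A)) :=
  torsors_sigma_fixed_group_general k A σA τ hτ n d χ hcoc hτχ
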